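/- arXiv:1104.4203 — 7 statements merged into one kernel-verified Lean document; each statement's English description precedes it below -/
import Mathlib

section
/- If p and q are both periods of a string w, and p + q ≤ |w| + gcd(p,q), then gcd(p,q) is also a period of w. -/
/-!
Euclid's algorithm on the periods. For periods `p < q` of `w` and `d = gcd p q`, the prefix of
length `|w| - p` has the periods `p` and `q - p`, with `gcd p (q - p) = d`, and satisfies the
length hypothesis again, so by induction it has period `d`. Since `|w| - p ≥ q - d ≥ p`, that
prefix covers a full period of `w`, and reducing positions modulo `p` (a multiple of `d`) carries
the period `d` over to all of `w`.
-/

/-- `p` is a period of the string (list) `w`: `p ≥ 1` and `w[i] = w[i+p]`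
for all indices with `i + p` still inside `w`. -/
def IsPeriod {α : Type*} (w : List α) (p : ℕ) : Prop :=
  1 ≤ p ∧ ∀ i, i + p < w.length → w[i]? = w[i + p]?

namespace IsPeriod

variable {α : Type*} {w : List α} {p q d : ℕ}

theorem getElem?_add_mul (hp : IsPeriod w p) (i : ℕ) :
    ∀ k, i + k * p < w.length → w[i]? = w[i + k * p]?
  | 0, _ => by simp
  | k + 1, hk => by
    rw [hp.getElem?_add_mul i k (by nlinarith), hp.2 _ (by linarith), add_one_mul, add_assoc]

theorem getElem?_mod (hp : IsPeriod w p) {i : ℕ} (hi : i < w.length) : w[i % p]? = w[i]? := by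
  have hi' : i % p + i / p * p < w.length := by rwa [mul_comm, Nat.mod_add_div]
  rw [hp.getElem?_add_mul _ _ hi', mul_comm, Nat.mod_add_div]

theorem getElem?_eq_of_modEq (hp : IsPeriod w p) {i j : ℕ} (hij : i ≡ j [MOD p])
    (hi : i < w.length) (hj : j < w.length) : w[i]? = w[j]? := by
  rw [← hp.getElem?_mod hi, ← hp.getElem?_mod hj, hij]

theorem take (hp : IsPeriod w p) (m : ℕ) : IsPeriod (w.take m) p :=
  ⟨hp.1, fun i hi => by
    rw [List.length_take] at hi
    rw [List.getElem?_take_of_lt (by omega), List.getElem?_take_of_lt (by omega)]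
    exact hp.2 i (by omega)⟩

theorem take_length_sub (hp : IsPeriod w p) (hq : IsPeriod w q) (hpq : p < q) :
    IsPeriod (w.take (w.length - p)) (q - p) :=
  ⟨by omega, fun i hi => by
    rw [List.length_take] at hi
    rw [List.getElem?_take_of_lt (by omega), List.getElem?_take_of_lt (by omega),
      hq.2 i (by omega), hp.2 (i + (q - p)) (by omega)]
    congr 1
    omega⟩

theorem of_take (hp : IsPeriod w p) {m : ℕ} (hpm : p ≤ m) (hd : IsPeriod (w.take m) d)
    (hdp : d ∣ p) : IsPeriod w d := by
  refine ⟨hd.1, fun i hi => ?_⟩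
  have hmod_lt : ∀ j < w.length, j % p < m ∧ j % p < w.length := fun j hj =>
    ⟨(Nat.mod_lt j hp.1).trans_le hpm, (Nat.mod_le j p).trans_lt hj⟩
  obtain ⟨him, hin⟩ := hmod_lt i (by omega)
  obtain ⟨hidm, hidn⟩ := hmod_lt (i + d) hi
  have hmod : i % p ≡ (i + d) % p [MOD d] :=
    ((Nat.mod_modEq i p).of_dvd hdp).trans
      (Nat.add_modEq_right.symm.trans ((Nat.mod_modEq (i + d) p).of_dvd hdp).symm)
  have hprefix := hd.getElem?_eq_of_modEq hmod (by simp [him, hin]) (by simp [hidm, hidn])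
  rw [List.getElem?_take_of_lt him, List.getElem?_take_of_lt hidm] at hprefix
  rw [← hp.getElem?_mod (by omega), hprefix, hp.getElem?_mod hi]

end IsPeriod

/-- Fine–Wilf periodicity lemma. -/
theorem periodicity_lemma {α : Type*} (w : List α) (p q : ℕ)
    (hp : IsPeriod w p) (hq : IsPeriod w q)
    (h : p + q ≤ w.length + Nat.gcd p q) :
    IsPeriod w (Nat.gcd p q) := by
  obtain hpq | rfl | hqp := lt_trichotomy p q
  · have hgcd : Nat.gcd p (q - p) = Nat.gcd p q := Nat.gcd_sub_self_right hpq.le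
    have hd_le : Nat.gcd p q ≤ q - p := hgcd ▸ Nat.gcd_le_right _ (by omega)
    have hprefix : IsPeriod (w.take (w.length - p)) (Nat.gcd p q) := by
      rw [← hgcd]
      exact periodicity_lemma _ p (q - p) (hp.take _) (hp.take_length_sub hq hpq)
        (by rw [List.length_take, hgcd]; omega)
    exact hp.of_take (by omega) hprefix (Nat.gcd_dvd_left p q)
  · simpa using hp
  · rw [Nat.gcd_comm] at h ⊢
    exact periodicity_lemma w q p hq hp (by omega)
termination_by (p + q, p)
decreasing_by
  · exact Prod.Lex.left _ _ (by have := hp.1; omega)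
  · exact Prod.Lex.right' _ (by omega) hqp
end

section
/- If the longest proper border of a string t has length b ≥ |t|/2, then setting p = |t| - b, the set of borders of t of length at least |t|/2 is exactly { |t| - α·p : α an integer with 1 ≤ α ≤ |t|/(2p) } (equivalently, all long borders form an arithmetic progression with common difference p). -/
/-!
Borders and periods are dual: `x` is a border of `t` iff `|t| - x` is a period of `t`.
Two periods `p ≤ q` with `p + q ≤ |t|` have `q - p` as a period as well, so by a Euclidean
descent every period `q` with `p + q ≤ |t|` is a multiple of the least period `p = |t| - b`.
A border `x ≥ |t|/2` gives such a period `|t| - x`, and conversely every multiple `a p ≤ |t|/2`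
of `p` is a period, hence `|t| - a p` is a border.
-/

/-- `b` is a (proper) border of `w`: the prefix of length `b` equals the suffix of length `b`. -/
def IsBorder {α : Type*} (w : List α) (b : ℕ) : Prop :=
  b < w.length ∧ w.take b = w.drop (w.length - b)

def HasPeriod {α : Type*} (t : List α) (q : ℕ) : Prop :=
  ∀ i, i + q < t.length → t[i]? = t[i + q]?

section

variable {α : Type*} {t : List α}

theorem isBorder_iff_hasPeriod {x : ℕ} :
    IsBorder t x ↔ x < t.length ∧ HasPeriod t (t.length - x) := by
  refine and_congr_right fun hx => ⟨fun h i hi => ?_, fun h => ?_⟩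
  · have := congrArg (·[i]?) h
    simp only [List.getElem?_take, List.getElem?_drop, show i < x by omega, if_true] at this
    rw [this, show t.length - x + i = i + (t.length - x) by omega]
  · refine List.ext_getElem? fun i => ?_
    rw [List.getElem?_take, List.getElem?_drop]
    split_ifs with hix
    · rw [h i (by omega), show i + (t.length - x) = t.length - x + i by omega]
    · rw [List.getElem?_eq_none (by omega)]

namespace HasPeriod

variable {p q : ℕ}

theorem mul (hp : HasPeriod t p) (a : ℕ) : HasPeriod t (a * p) := by
  induction a with
  | zero => intro i _; simp
  | succ a ih =>
    intro i hi
    rw [Nat.succ_mul] at hi ⊢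
    rw [ih i (by omega), hp _ (by omega), Nat.add_assoc]

theorem sub (hp : HasPeriod t p) (hq : HasPeriod t q) (hpq : p ≤ q) (hn : p + q ≤ t.length) :
    HasPeriod t (q - p) := by
  intro i hi
  by_cases hip : p ≤ i
  · have h₁ := hp (i - p) (by omega)
    have h₂ := hq (i - p) (by omega)
    rw [Nat.sub_add_cancel hip] at h₁
    rwa [h₁, show i - p + q = i + (q - p) by omega] at h₂
  · have h₁ := hq i (by omega)
    have h₂ := hp (i + (q - p)) (by omega)
    rw [h₁, h₂, show i + (q - p) + p = i + q by omega]

end HasPeriod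

theorem dvd_of_isLeast_period {p q : ℕ} (hp : IsLeast {r | 0 < r ∧ HasPeriod t r} p)
    (hq : HasPeriod t q) (hn : p + q ≤ t.length) : p ∣ q := by
  induction q using Nat.strong_induction_on with
  | _ q ih =>
    rcases Nat.eq_zero_or_pos q with rfl | hq₀
    · exact dvd_zero p
    have hpq : p ≤ q := hp.2 ⟨hq₀, hq⟩
    have hp₀ : 0 < p := hp.1.1
    have hdvd := ih (q - p) (by omega) (hp.1.2.sub hq hpq hn) (by omega)
    simpa [Nat.sub_add_cancel hpq] using Nat.dvd_add hdvd (dvd_refl p)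

theorem isLeast_hasPeriod_length_sub {b : ℕ} (hb : IsGreatest {x | IsBorder t x} b) :
    IsLeast {r | 0 < r ∧ HasPeriod t r} (t.length - b) := by
  obtain ⟨hbn, hp⟩ := isBorder_iff_hasPeriod.mp hb.1
  refine ⟨⟨by omega, hp⟩, fun q ⟨hq₀, hq⟩ => ?_⟩
  by_cases hqn : q ≤ t.length
  · have : t.length - q ≤ b :=
      hb.2 <| isBorder_iff_hasPeriod.mpr ⟨by omega, by rwa [Nat.sub_sub_self hqn]⟩
    omega
  · omega

end

theorem long_borders_arithmetic_general {α : Type*} (t : List α) (b : ℕ)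
    (hb : IsBorder t b) (hmax : ∀ b', IsBorder t b' → b' ≤ b) :
    ∀ x, (IsBorder t x ∧ t.length ≤ 2 * x) ↔
      ∃ a : ℕ, 1 ≤ a ∧ 2 * (a * (t.length - b)) ≤ t.length ∧
        x = t.length - a * (t.length - b) := by
  intro x
  have hleast := isLeast_hasPeriod_length_sub ⟨hb, fun b' h => hmax b' h⟩
  have hbn : b < t.length := hb.1
  constructor
  · rintro ⟨hx, hxn⟩
    obtain ⟨hxlt, hq⟩ := isBorder_iff_hasPeriod.mp hx
    have hpq : t.length - b ≤ t.length - x := hleast.2 ⟨by omega, hq⟩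
    obtain ⟨a, ha⟩ := dvd_of_isLeast_period hleast hq (by omega)
    rw [Nat.mul_comm] at ha
    refine ⟨a, Nat.pos_of_ne_zero ?_, by omega, by omega⟩
    rintro rfl
    omega
  · rintro ⟨a, ha₁, ha₂, rfl⟩
    have hap : 0 < a * (t.length - b) := Nat.mul_pos ha₁ (by omega)
    refine ⟨isBorder_iff_hasPeriod.mpr ⟨by omega, ?_⟩, by omega⟩
    rw [Nat.sub_sub_self (by omega)]
    exact hleast.1.2.mul a

/-- If the longest proper border `b` of `t` satisfies `b ≥ |t|/2`, then with `p = |t| - b`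
(the shortest period), the borders of length at least `|t|/2` are exactly
`{ |t| - α·p : 1 ≤ α ≤ |t|/(2p) }`, an arithmetic progression with difference `p`. -/
theorem long_borders_arithmetic {α : Type*} (t : List α) (b : ℕ)
    (hb : IsBorder t b) (hmax : ∀ b', IsBorder t b' → b' ≤ b)
    (hlong : t.length ≤ 2 * b) :
    ∀ x, (IsBorder t x ∧ t.length ≤ 2 * x) ↔
      ∃ a : ℕ, 1 ≤ a ∧ 2 * (a * (t.length - b)) ≤ t.length ∧
        x = t.length - a * (t.length - b) :=
  long_borders_arithmetic_general t b hb hmax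
end

section
/- If b1 > b2 ≥ |t|/2 are both borders of a string t and p is the shortest period of t, then b1 - b2 is a multiple of p. -/
lemma IsBorder.isPeriod_length_sub {α : Type*} {w : List α} {b : ℕ} (h : IsBorder w b) :
    IsPeriod w (w.length - b) := by
  obtain ⟨hb, hborder⟩ := h
  refine ⟨by omega, fun i hi => ?_⟩
  have hprefix : (w.take b)[i]? = w[i]? := List.getElem?_take_of_lt (by omega)
  have hsuffix : (w.drop (w.length - b))[i]? = w[w.length - b + i]? := List.getElem?_drop
  rw [← hprefix, hborder, hsuffix, Nat.add_comm]

lemma IsPeriod.sub {α : Type*} {w : List α} {p q : ℕ} (hp : IsPeriod w p) (hq : IsPeriod w q)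
    (hlt : p < q) (hle : p + q ≤ w.length) : IsPeriod w (q - p) := by
  refine ⟨by omega, fun i hi => ?_⟩
  by_cases h : i + q < w.length
  · have hstep := hp.2 (i + (q - p)) (by omega)
    rw [show i + (q - p) + p = i + q by omega] at hstep
    exact (hq.2 i h).trans hstep.symm
  · -- `i + q` is past the end, so step back by `p` first; then `i ≥ p` since `p + q ≤ |w|`.
    have hback := hp.2 (i - p) (by omega)
    have hforth := hq.2 (i - p) (by omega)
    rw [show i - p + p = i by omega] at hback
    rw [show i - p + q = i + (q - p) by omega] at hforth
    rw [← hback, hforth]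

lemma IsLeast.dvd_of_isPeriod {α : Type*} {w : List α} {p q : ℕ}
    (hp : IsLeast {q | IsPeriod w q} p) (hq : IsPeriod w q) (hle : p + q ≤ w.length) : p ∣ q := by
  induction q using Nat.strong_induction_on with
  | _ q ih =>
    rcases (hp.2 hq).eq_or_lt with rfl | hlt
    · exact dvd_rfl
    · have hsub := ih (q - p) (by have := hp.1.1; omega) (hp.1.sub hq hlt hle) (by omega)
      simpa only [Nat.sub_add_cancel hlt.le] using hsub.add (dvd_refl p)

lemma IsLeast.dvd_length_sub_of_isBorder {α : Type*} {w : List α} {p b : ℕ}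
    (hp : IsLeast {q | IsPeriod w q} p) (hb : IsBorder w b) (hlong : w.length ≤ 2 * b) :
    p ∣ w.length - b := by
  have hper := hb.isPeriod_length_sub
  have hpb : p ≤ w.length - b := hp.2 hper
  exact hp.dvd_of_isPeriod hper (by omega)

/-- If `b1 > b2 ≥ |t|/2` are both borders of `t` and `p` is the shortest period of `t`,
then `b1 - b2` is a multiple of `p`. -/
theorem long_borders_diff_multiple {α : Type*} (t : List α) (b1 b2 p : ℕ)
    (h1 : IsBorder t b1) (h2 : IsBorder t b2) (hgt : b2 < b1)
    (hlong : t.length ≤ 2 * b2)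
    (hp : IsPeriod t p) (hmin : ∀ q, IsPeriod t q → p ≤ q) :
    p ∣ b1 - b2 := by
  have hleast : IsLeast {q | IsPeriod t q} p := ⟨hp, hmin⟩
  have hd1 := hleast.dvd_length_sub_of_isBorder h1 (by omega)
  have hd2 := hleast.dvd_length_sub_of_isBorder h2 hlong
  have hb1 : b1 < t.length := h1.1
  rw [show b1 - b2 = (t.length - b2) - (t.length - b1) by omega]
  exact Nat.dvd_sub hd2 hd1
end

section
/- Let T be a rooted binary tree where each leaf has a positive integer weight and each internal node's weight is the sum of its two children's weights; define rank(v) = ⌊log₂(weight(v))⌋. Call a node 'charged' if its weight does not exceed its sibling's weight. Then for each k, the number of charged nodes of rank k is at most W / 2^k, where W is the weight of the root. -/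
/-- Rooted binary trees with positive integer weights at the leaves. -/
inductive WTree : Type
  | leaf : ℕ → WTree
  | node : WTree → WTree → WTree

namespace WTree

/-- The weight of a node: leaf weights are given, internal weights are sums of children. -/
def weight : WTree → ℕ
  | leaf w => w
  | node l r => weight l + weight r

/-- All leaf weights are positive. -/
def posWeights : WTree → Prop
  | leaf w => 1 ≤ w
  | node l r => posWeights l ∧ posWeights r

/-- The rank of a node: `⌊log₂ weight⌋`. -/
def rank (t : WTree) : ℕ := Nat.log 2 t.weight

/-- The number of charged nodes of rank `k` in the tree: a node is charged when its
weight does not exceed its sibling's weight. -/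
def chargedCount (k : ℕ) : WTree → ℕ
  | leaf _ => 0
  | node l r =>
      (if weight l ≤ weight r ∧ rank l = k then 1 else 0) +
      (if weight r ≤ weight l ∧ rank r = k then 1 else 0) +
      chargedCount k l + chargedCount k r

end WTree

/-!
Induct on the tree, proving `2 ^ k * chargedCount k t ≤ weight t`. A node of weight at most its
sibling's has rank strictly below its parent's, so a charged node of rank `k` contains no charged
node of rank `k` below it: its subtree contributes exactly one node, paid for by its own weight
`≥ 2 ^ k`. Every other child passes on the bound of its subtree, and the weights of the two
children add up to the weight of the parent.
-/

lemma Nat.log_two_lt_log_two_add {a b : ℕ} (ha : a ≠ 0) (hab : a ≤ b) :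
    Nat.log 2 a < Nat.log 2 (a + b) :=
  calc Nat.log 2 a < Nat.log 2 (a * 2) := by rw [Nat.log_mul_base one_lt_two ha]; omega
    _ ≤ Nat.log 2 (a + b) := Nat.log_mono_right (by omega)

namespace WTree

lemma weight_pos : ∀ {t : WTree}, t.posWeights → 0 < t.weight
  | leaf _, h => h
  | node _ _, h => Nat.add_pos_left (weight_pos h.1) _

lemma pow_rank_le_weight {t : WTree} (ht : t.posWeights) : 2 ^ t.rank ≤ t.weight :=
  Nat.pow_log_le_self 2 (weight_pos ht).ne'

lemma rank_left_le (l r : WTree) : l.rank ≤ (node l r).rank :=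
  Nat.log_mono_right (Nat.le_add_right _ _)

lemma rank_right_le (l r : WTree) : r.rank ≤ (node l r).rank :=
  Nat.log_mono_right (Nat.le_add_left _ _)

lemma rank_left_lt {l r : WTree} (hl : l.posWeights) (hlr : l.weight ≤ r.weight) :
    l.rank < (node l r).rank :=
  Nat.log_two_lt_log_two_add (weight_pos hl).ne' hlr

lemma rank_right_lt {l r : WTree} (hr : r.posWeights) (hrl : r.weight ≤ l.weight) :
    r.rank < (node l r).rank := by
  simpa only [rank, weight, Nat.add_comm r.weight] using
    Nat.log_two_lt_log_two_add (weight_pos hr).ne' hrl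

lemma chargedCount_eq_zero_of_rank_le {k : ℕ} :
    ∀ {t : WTree}, t.posWeights → t.rank ≤ k → t.chargedCount k = 0
  | leaf _, _, _ => rfl
  | node l r, ⟨hl, hr⟩, hk => by
    have hl_charged : ¬ (l.weight ≤ r.weight ∧ l.rank = k) := fun ⟨hlr, hlk⟩ =>
      (rank_left_lt hl hlr).not_ge (hlk ▸ hk)
    have hr_charged : ¬ (r.weight ≤ l.weight ∧ r.rank = k) := fun ⟨hrl, hrk⟩ =>
      (rank_right_lt hr hrl).not_ge (hrk ▸ hk)
    simp only [chargedCount, hl_charged, hr_charged, if_false,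
      chargedCount_eq_zero_of_rank_le hl ((rank_left_le l r).trans hk),
      chargedCount_eq_zero_of_rank_le hr ((rank_right_le l r).trans hk)]

lemma pow_mul_charged_add_chargedCount_le {k : ℕ} {c : WTree} (hc : c.posWeights)
    (ih : 2 ^ k * c.chargedCount k ≤ c.weight) (charged : Prop) [Decidable charged] :
    2 ^ k * ((if charged ∧ c.rank = k then 1 else 0) + c.chargedCount k) ≤ c.weight := by
  by_cases h : charged ∧ c.rank = k
  · rw [if_pos h, chargedCount_eq_zero_of_rank_le hc h.2.le, ← h.2]
    simpa using pow_rank_le_weight hc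
  · rwa [if_neg h, Nat.zero_add]

lemma pow_mul_chargedCount_le (k : ℕ) : ∀ {t : WTree}, t.posWeights →
    2 ^ k * t.chargedCount k ≤ t.weight
  | leaf _, _ => by simp [chargedCount]
  | node l r, ⟨hl, hr⟩ => by
    have hl' := pow_mul_charged_add_chargedCount_le hl (pow_mul_chargedCount_le k hl)
      (l.weight ≤ r.weight)
    have hr' := pow_mul_charged_add_chargedCount_le hr (pow_mul_chargedCount_le k hr)
      (r.weight ≤ l.weight)
    simp only [chargedCount, weight]
    linarith

end WTree

/-- The number of charged nodes of rank `k` is at most `W / 2^k`,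
where `W` is the weight of the root. -/
theorem chargedCount_le (t : WTree) (hpos : t.posWeights) (k : ℕ) :
    t.chargedCount k ≤ t.weight / 2 ^ k := by
  rw [Nat.le_div_iff_mul_le (Nat.two_pow_pos k), Nat.mul_comm]
  exact WTree.pow_mul_chargedCount_le k hpos
end

section
/- Let T be a rooted binary tree where leaves have positive integer weights summing to W and each internal node's weight is the sum of its children's. Then ∑ over internal nodes v of min(rank(left(v)), rank(right(v))) ≤ 2W, where rank(u) = ⌊log₂(weight(u))⌋. -/
namespace WTree

/-- The sum over internal nodes `v` of `min (rank (left v)) (rank (right v))`. -/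
def rankSum : WTree → ℕ
  | leaf _ => 0
  | node l r => min (rank l) (rank r) + rankSum l + rankSum r

end WTree

/-!
Strengthen the claim to `rankSum t + rank t + 2 ≤ 2 * weight t` and induct on the tree.
At a node the parent's rank is at most one more than the larger child rank, so
`min + rank (node l r) ≤ min + max + 1 = rank l + rank r + 1`: the two children's
invariants together pay for the node with one unit to spare.
-/

theorem Nat.log_add_le_max_succ (b m n : ℕ) :
    Nat.log b (m + n) ≤ max (Nat.log b m) (Nat.log b n) + 1 := by
  rcases le_or_gt b 1 with hb | hb
  · simp [Nat.log_of_left_le_one hb]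
  rcases Nat.eq_zero_or_pos (max m n) with h0 | hpos
  · simp_all
  calc Nat.log b (m + n) ≤ Nat.log b (max m n * b) :=
        Nat.log_mono_right (by nlinarith [le_max_left m n, le_max_right m n])
    _ = Nat.log b (max m n) + 1 := Nat.log_mul_base hb hpos.ne'
    _ = max (Nat.log b m) (Nat.log b n) + 1 := by
        rw [Nat.log_monotone.map_max]

namespace WTree

theorem rank_node_le (l r : WTree) : (node l r).rank ≤ max l.rank r.rank + 1 :=
  Nat.log_add_le_max_succ 2 l.weight r.weight

theorem rankSum_add_rank_add_two_le {t : WTree} (h : t.posWeights) :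
    t.rankSum + t.rank + 2 ≤ 2 * t.weight := by
  induction t with
  | leaf w =>
    have hw : 1 ≤ w := h
    have hlog : Nat.log 2 w < w := Nat.log_lt_self 2 (by omega)
    simp only [rankSum, rank, weight]
    omega
  | node l r ihl ihr =>
    have hl := ihl h.1
    have hr := ihr h.2
    have hnode := rank_node_le l r
    have hminmax : min l.rank r.rank + max l.rank r.rank = l.rank + r.rank := min_add_max _ _
    simp only [rankSum, weight]
    omega

end WTree

/-- `∑` over internal nodes `v` of `min (rank (left v), rank (right v))` is at most `2W`,
where `W` is the root's weight. -/
theorem rankSum_le (t : WTree) (hpos : t.posWeights) :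
    t.rankSum ≤ 2 * t.weight := by
  have := WTree.rankSum_add_rank_add_two_le hpos
  omega
end

section
/- In a rooted tree on n nodes, one can choose a set M of at most n/⌈log₂ n⌉ 'macro' nodes such that every connected component of the forest obtained by deleting M has at most ⌈log₂ n⌉ nodes. (Existence of a micro-macro decomposition.) -/
/-!
Root the tree and let `k = ⌈log₂ n⌉`. Repeatedly take a deepest vertex `v` whose subtree (among
the vertices not yet removed) has at least `k` vertices, make `v` a macro node and remove its
subtree. The subtrees hanging below `v` then have fewer than `k` vertices each and are cut off
from the rest by `v`, and every macro node accounts for at least `k` removed vertices, so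
`k * |M| ≤ n`.
-/

open Finset SimpleGraph

variable {V : Type*}

namespace SimpleGraph

variable {G : SimpleGraph V}

theorem IsTree.exists_parent (hG : G.IsTree) (root : V) :
    ∃ (f : V → V) (depth : V → ℕ), f root = root ∧ (∀ v, v ≠ root → depth (f v) < depth v) ∧
      ∀ u w, G.Adj u w → f u = w ∨ f w = u := by
  choose p hp hp_unique using fun v => hG.existsUnique_path v root
  refine ⟨fun v => (p v).snd, fun v => (p v).length, ?_, fun v hv => ?_, fun u w h => ?_⟩
  · show (p root).snd = root
    rw [← hp_unique root .nil .nil]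
    rfl
  · have hnil : ¬ (p v).Nil := Walk.not_nil_of_ne hv
    have htail : (p v).tail = p (p v).snd := hp_unique _ _ (hp v).tail
    have := Walk.length_tail_add_one hnil
    rw [htail] at this
    show (p (p v).snd).length < (p v).length
    omega
  · by_cases hu : u ∈ (p w).support
    · exact .inr (hG.isAcyclic.eq_snd_of_adj_start (hp w) h.symm hu).symm
    · have hpath : (Walk.cons h (p w)).IsPath := (hp w).cons hu
      left
      show (p u).snd = w
      rw [← hp_unique u _ hpath, Walk.snd_cons]

theorem card_connectedComponent_le_of_adj_closed {M : Set V} {Q : Finset V}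
    (hQ : ∀ x ∈ Q, ∀ w, G.Adj x w → w ∈ Q ∨ w ∈ M) {v : ↥Mᶜ} (hv : ↑v ∈ Q) :
    Nat.card {u // (G.induce Mᶜ).connectedComponentMk u = (G.induce Mᶜ).connectedComponentMk v}
      ≤ #Q := by
  have hmem : ∀ u : ↥Mᶜ, (G.induce Mᶜ).Reachable v u → ↑u ∈ Q := by
    intro u hvu
    rw [reachable_iff_reflTransGen] at hvu
    induction hvu with
    | refl => exact hv
    | @tail x y _ hxy ih => exact (hQ x ih y hxy).resolve_right y.2
  rw [← Nat.card_eq_finsetCard]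
  refine Nat.card_le_card_of_injective
    (fun u => ⟨u.1, hmem u.1 (ConnectedComponent.exact u.2).symm⟩) fun a b hab => ?_
  exact Subtype.ext (Subtype.ext (congrArg Subtype.val hab :))

end SimpleGraph

/-- The condition `a ≠ b` drops the loop at the root (a fixed point of `f`), so that a descent
into `v` from another vertex always ends with a step from a child of `v`. -/
def Descends (f : V → V) : V → V → Prop :=
  Relation.ReflTransGen fun a b => f a = b ∧ a ≠ b

namespace Descends

variable {f : V → V} {u v : V}

theorem refl (f : V → V) (u : V) : Descends f u u := Relation.ReflTransGen.refl

theorem of_parent (h : Descends f (f u) v) : Descends f u v := by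
  by_cases hu : f u = u
  · rwa [hu] at h
  · exact .head ⟨rfl, Ne.symm hu⟩ h

theorem parent (h : Descends f u v) (hne : u ≠ v) : Descends f (f u) v := by
  obtain rfl | ⟨c, ⟨rfl, -⟩, hc⟩ := h.cases_head
  · exact absurd rfl hne
  · exact hc

theorem exists_child (h : Descends f u v) (hne : u ≠ v) :
    ∃ c, f c = v ∧ c ≠ v ∧ Descends f u c := by
  obtain rfl | ⟨c, hc, hcv, hne'⟩ := h.cases_tail
  · exact absurd rfl hne
  · exact ⟨c, hcv, hne', hc⟩

theorem to_root {depth : V → ℕ} {root : V} (hdepth : ∀ v, v ≠ root → depth (f v) < depth v)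
    (u : V) : Descends f u root := by
  by_cases hu : u = root
  · exact hu ▸ refl f root
  · have := hdepth u hu
    exact of_parent (to_root hdepth (f u))
termination_by depth u

theorem eq_of_adj {G : SimpleGraph V} (hadj : ∀ u w, G.Adj u w → f u = w ∨ f w = u) {x w c : V}
    (hx : Descends f x c) (hw : ¬ Descends f w c) (h : G.Adj x w) : x = c ∧ w = f c := by
  rcases hadj x w h with rfl | rfl
  · by_cases hxc : x = c
    · exact ⟨hxc, hxc ▸ rfl⟩
    · exact absurd (hx.parent hxc) hw
  · exact absurd hx.of_parent hw

end Descends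

open Classical in
noncomputable def subtree (f : V → V) (A : Finset V) (v : V) : Finset V :=
  A.filter (Descends f · v)

theorem mem_subtree {f : V → V} {A : Finset V} {u v : V} :
    u ∈ subtree f A v ↔ u ∈ A ∧ Descends f u v := by
  classical exact mem_filter

theorem subtree_subset (f : V → V) (A : Finset V) (v : V) : subtree f A v ⊆ A :=
  fun _ hu => (mem_subtree.1 hu).1

/-- Neighbours outside `A` are ignored, so that `A` may be what is left of the tree after some
subtrees have been cut off. -/
def SimpleGraph.IsMacroSet (G : SimpleGraph V) (k : ℕ) (A M : Finset V) : Prop :=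
  ∀ u ∈ A, u ∉ M → ∃ Q ⊆ A, u ∈ Q ∧ #Q ≤ k ∧ ∀ x ∈ Q, ∀ w ∈ A, G.Adj x w → w ∈ Q ∨ w ∈ M

theorem SimpleGraph.isMacroSet_empty {G : SimpleGraph V} {k : ℕ} {A : Finset V} (hA : #A ≤ k) :
    G.IsMacroSet k A ∅ :=
  fun _ hu _ => ⟨A, subset_rfl, hu, hA, fun _ _ _ hw _ => .inl hw⟩

section RootedTree

variable {G : SimpleGraph V} {f : V → V} {depth : V → ℕ} {root : V} {k : ℕ}

theorem subtree_root (hdepth : ∀ v, v ≠ root → depth (f v) < depth v) (A : Finset V) :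
    subtree f A root = A := by
  ext u
  simp [mem_subtree, Descends.to_root hdepth u]

theorem exists_heavy_with_light_children [Fintype V] (hroot : f root = root)
    (hdepth : ∀ v, v ≠ root → depth (f v) < depth v) {A : Finset V}
    (h : ∃ v, k ≤ #(subtree f A v)) :
    ∃ v, k ≤ #(subtree f A v) ∧ ∀ c, f c = v → c ≠ v → #(subtree f A c) < k := by
  obtain ⟨v₀, hv₀⟩ := h
  obtain ⟨v, hv, hdeepest⟩ :=
    (univ.filter fun v => k ≤ #(subtree f A v)).exists_max_image depth ⟨v₀, by simpa using hv₀⟩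
  refine ⟨v, (mem_filter.1 hv).2, fun c hcv hc => not_le.1 fun hheavy => ?_⟩
  subst hcv
  have hc_root : c ≠ root := fun h => hc (by rw [h, hroot])
  have := hdepth c hc_root
  have := hdeepest c (by simpa using hheavy)
  omega

theorem SimpleGraph.IsMacroSet.insert_of_light_children [DecidableEq V]
    (hadj : ∀ u w, G.Adj u w → f u = w ∨ f w = u) {A M : Finset V} {v : V}
    (hlight : ∀ c, f c = v → c ≠ v → #(subtree f A c) ≤ k)
    (hM : G.IsMacroSet k (A \ subtree f A v) M) : G.IsMacroSet k A (insert v M) := by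
  intro u hu huM
  rw [mem_insert, not_or] at huM
  by_cases huv : Descends f u v
  · obtain ⟨c, rfl, hcv, huc⟩ := huv.exists_child huM.1
    refine ⟨subtree f A c, subtree_subset f A c, mem_subtree.2 ⟨hu, huc⟩, hlight c rfl hcv,
      fun x hx w hw hxw => ?_⟩
    by_cases hwc : Descends f w c
    · exact .inl (mem_subtree.2 ⟨hw, hwc⟩)
    · exact .inr (mem_insert.2 (.inl (Descends.eq_of_adj hadj (mem_subtree.1 hx).2 hwc hxw).2))
  · obtain ⟨Q, hQA, huQ, hQk, hQ⟩ := hM u (by simp [mem_subtree, hu, huv]) huM.2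
    refine ⟨Q, hQA.trans sdiff_subset, huQ, hQk, fun x hx w hw hxw => ?_⟩
    have hxA := mem_sdiff.1 (hQA hx)
    have hxv : ¬ Descends f x v := fun h => hxA.2 (mem_subtree.2 ⟨hxA.1, h⟩)
    by_cases hwv : Descends f w v
    · exact .inr (mem_insert.2 (.inl (Descends.eq_of_adj hadj hwv hxv hxw.symm).1))
    · rcases hQ x hx w (by simp [mem_subtree, hw, hwv]) hxw with h | h
      · exact .inl h
      · exact .inr (mem_insert_of_mem h)

theorem exists_isMacroSet [Fintype V] [DecidableEq V] (hroot : f root = root)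
    (hdepth : ∀ v, v ≠ root → depth (f v) < depth v)
    (hadj : ∀ u w, G.Adj u w → f u = w ∨ f w = u) (hk : 0 < k) (A : Finset V) :
    ∃ M, k * #M ≤ #A ∧ G.IsMacroSet k A M := by
  induction A using Finset.strongInduction with
  | H A ih =>
  by_cases hheavy : ∃ v, k ≤ #(subtree f A v)
  · obtain ⟨v, hv, hlight⟩ := exists_heavy_with_light_children hroot hdepth hheavy
    have hsub := subtree_subset f A v
    obtain ⟨M, hMk, hM⟩ :=
      ih _ (sdiff_ssubset hsub (card_pos.1 (hk.trans_le hv)))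
    refine ⟨insert v M, ?_, hM.insert_of_light_children hadj fun c hcv hc => (hlight c hcv hc).le⟩
    have := card_sdiff_add_card_eq_card hsub
    calc k * #(insert v M) ≤ k * #M + k := by
          simpa [mul_add] using Nat.mul_le_mul_left k (card_insert_le v M)
      _ ≤ #A := by omega
  · simp only [not_exists, not_le] at hheavy
    refine ⟨∅, by simp, isMacroSet_empty ?_⟩
    simpa [subtree_root hdepth] using (hheavy root).le

end RootedTree

/-- Micro-macro decomposition: in a tree on `n ≥ 2` nodes one can choose a set `M` of at
most `n / ⌈log₂ n⌉` macro nodes so that every connected component left after deleting `M`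
has at most `⌈log₂ n⌉` nodes. -/
theorem micro_macro_decomposition {n : ℕ} (hn : 2 ≤ n)
    (G : SimpleGraph (Fin n)) (hG : G.IsTree) :
    ∃ M : Finset (Fin n), M.card ≤ n / Nat.clog 2 n ∧
      ∀ C : (G.induce ((↑M : Set (Fin n))ᶜ)).ConnectedComponent,
        Nat.card {v // (G.induce ((↑M : Set (Fin n))ᶜ)).connectedComponentMk v = C}
          ≤ Nat.clog 2 n := by
  have hk : 0 < Nat.clog 2 n := Nat.clog_pos one_lt_two hn
  obtain ⟨f, depth, hroot, hdepth, hadj⟩ := hG.exists_parent ⟨0, by omega⟩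
  obtain ⟨M, hMcard, hM⟩ := exists_isMacroSet hroot hdepth hadj hk univ
  refine ⟨M, (Nat.le_div_iff_mul_le hk).2 (by simpa [mul_comm] using hMcard), fun C => ?_⟩
  induction C using ConnectedComponent.ind with
  | h v =>
  obtain ⟨Q, -, hvQ, hQk, hQ⟩ := hM v (mem_univ _) v.2
  calc _ ≤ #Q := card_connectedComponent_le_of_adj_closed (fun x hx w => hQ x hx w (mem_univ w)) hvQ
    _ ≤ _ := hQk
end

section
/- If a string w occurs in s and 2^k < |w| ≤ 2^{k+1}, then the prefix of w of length 2^k and the suffix of w of length 2^k both occur in s; conversely, if w = x·y·z where |w| ≤ 2^{k+1}, the length-2^k prefix and length-2^k suffix of w occur in s at positions i and j respectively with j - i = |w| - 2^k (i.e., they arise from a common occurrence), then w occurs in s. -/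
/-! The window `s[i, i + |w|)` is glued from its first `2^k` letters and its last `2^k`
letters; since `|w| ≤ 2^{k+1}` these two pieces overlap, so agreeing with `w` on both pieces
means agreeing with `w` everywhere. -/

theorem List.eq_of_take_eq_of_drop_eq {α : Type*} {l w : List α} {a b : ℕ} (hba : b ≤ a)
    (htake : l.take a = w.take a) (hdrop : l.drop b = w.drop b) : l = w := by
  have hdrop' : l.drop a = w.drop a := by
    rw [← Nat.add_sub_cancel' hba, ← List.drop_drop, hdrop, List.drop_drop]
  rw [← l.take_append_drop a, htake, hdrop', w.take_append_drop]

/-- Covers. Forward: if `w` occurs in `s` and `2^k < |w| ≤ 2^{k+1}`, then the length-`2^k`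
prefix and suffix of `w` occur in `s`. Converse: if the length-`2^k` prefix and suffix of
`w` occur in `s` at positions `i` and `i + |w| - 2^k` (arising from a common occurrence),
then, since the two fragments overlap and determine all of `w`, `w` occurs in `s`
(indeed `s[i..i+|w|-1] = w`). -/
theorem cover_characterization {α : Type*} (s w : List α) (k : ℕ)
    (hlow : 2 ^ k < w.length) (hhigh : w.length ≤ 2 ^ (k + 1)) :
    (w <:+: s → w.take (2 ^ k) <:+: s ∧ w.drop (w.length - 2 ^ k) <:+: s) ∧
    (∀ i, i + w.length ≤ s.length →
      (s.drop i).take (2 ^ k) = w.take (2 ^ k) →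
      (s.drop (i + w.length - 2 ^ k)).take (2 ^ k) = w.drop (w.length - 2 ^ k) →
      (s.drop i).take w.length = w) := by
  refine ⟨fun hw => ⟨(w.take_prefix _).isInfix.trans hw, (w.drop_suffix _).isInfix.trans hw⟩,
    fun i _ hpre hsuf => ?_⟩
  have hoverlap : w.length - 2 ^ k ≤ 2 ^ k := by rw [pow_succ] at hhigh; omega
  refine List.eq_of_take_eq_of_drop_eq hoverlap ?_ ?_
  · rw [List.take_take, min_eq_left hlow.le, hpre]
  · rw [List.drop_take, List.drop_drop, ← Nat.add_sub_assoc hlow.le,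
      Nat.sub_sub_self hlow.le, hsuf]
end
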